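/- arXiv:1209.1688 — 3 statements merged into one kernel-verified Lean document; each statement's English description precedes it below -/
import Mathlib

section
/- Let X be a binomial random variable with parameters k and p, and C = X − kp. Then for any θ with 0 ≤ θ ≤ log(4/3), E[exp(θ|C|)] ≤ 2·exp(2kθ²/3). -/
open Finset

/-- Taylor bound: `e^φ ≤ 1 + φ + (2/3)φ²` for `|φ| ≤ 3/4`. -/
lemma exp_le_quadratic {φ : ℝ} (hφ : |φ| ≤ 3/4) :
    Real.exp φ ≤ 1 + φ + 2/3 * φ ^ 2 := by
  have h1 : |φ| ≤ 1 := hφ.trans (by norm_num)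
  have hb := Real.exp_bound h1 (n := 3) (by norm_num)
  have hsum : ∑ m ∈ range 3, φ ^ m / m.factorial = 1 + φ + φ ^ 2 / 2 := by
    norm_num [Finset.sum_range_succ, Nat.factorial]
  rw [hsum] at hb
  have h2 := (abs_sub_le_iff.1 hb).1
  norm_num [Nat.factorial] at h2
  have h4 : |φ| ^ 3 * (2/9) ≤ (3/4) * φ ^ 2 * (2/9) := by
    have : |φ| ^ 3 = |φ| * φ ^ 2 := by
      rw [← sq_abs]; ring
    rw [this]
    have hsq : (0:ℝ) ≤ φ ^ 2 := sq_nonneg φ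
    nlinarith [abs_nonneg φ]
  nlinarith

/-- Signed MGF bound for the centered binomial. -/
lemma binomial_signed_mgf_bound (k : ℕ) (p : ℝ) (hp0 : 0 ≤ p) (hp1 : p ≤ 1)
    (φ : ℝ) (hφ : |φ| ≤ 3/4) :
    ∑ x ∈ Finset.range (k + 1),
        (k.choose x : ℝ) * p ^ x * (1 - p) ^ (k - x) * Real.exp (φ * ((x : ℝ) - k * p))
      ≤ Real.exp (2 * k * φ ^ 2 / 3) := by
  have hq : 0 ≤ 1 - p := by linarith
  -- rewrite each term
  have hterm : ∀ x ∈ Finset.range (k + 1),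
      (k.choose x : ℝ) * p ^ x * (1 - p) ^ (k - x) * Real.exp (φ * ((x : ℝ) - k * p))
        = (p * Real.exp φ) ^ x * (1 - p) ^ (k - x) * (k.choose x : ℝ)
            * Real.exp (-(φ * (k * p))) := by
    intro x _
    rw [mul_pow, ← Real.exp_nat_mul]
    rw [show φ * ((x : ℝ) - k * p) = (x : ℝ) * φ + (-(φ * (k * p))) by ring,
      Real.exp_add]
    ring
  rw [Finset.sum_congr rfl hterm, ← Finset.sum_mul, ← add_pow]
  have hpos : 0 ≤ p * Real.exp φ + (1 - p) := by positivity
  have h1 : p * Real.exp φ + (1 - p) ≤ Real.exp (p * (Real.exp φ - 1)) := by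
    have := Real.add_one_le_exp (p * (Real.exp φ - 1))
    linarith
  have h2 : (p * Real.exp φ + (1 - p)) ^ k ≤ Real.exp (p * (Real.exp φ - 1)) ^ k :=
    pow_le_pow_left₀ hpos h1 k
  calc (p * Real.exp φ + (1 - p)) ^ k * Real.exp (-(φ * (k * p)))
      ≤ Real.exp (p * (Real.exp φ - 1)) ^ k * Real.exp (-(φ * (k * p))) := by
        apply mul_le_mul_of_nonneg_right h2 (Real.exp_nonneg _)
    _ = Real.exp (k * p * (Real.exp φ - 1 - φ)) := by
        rw [← Real.exp_nat_mul, ← Real.exp_add]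
        ring_nf
    _ ≤ Real.exp (2 * k * φ ^ 2 / 3) := by
        apply Real.exp_le_exp.2
        have hA : Real.exp φ - 1 - φ ≤ 2/3 * φ ^ 2 := by
          have := exp_le_quadratic hφ; linarith
        have hB : 0 ≤ Real.exp φ - 1 - φ := by
          have := Real.add_one_le_exp φ; linarith
        have hk : (0:ℝ) ≤ k := Nat.cast_nonneg k
        have e1 : (k:ℝ) * p * (Real.exp φ - 1 - φ) ≤ (k:ℝ) * p * (2/3 * φ ^ 2) :=
          mul_le_mul_of_nonneg_left hA (mul_nonneg hk hp0)
        have e2 : (k:ℝ) * p * (2/3 * φ ^ 2) ≤ (k:ℝ) * 1 * (2/3 * φ ^ 2) := by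
          have hc : (0:ℝ) ≤ 2/3 * φ ^ 2 := by positivity
          have : (k:ℝ) * p ≤ (k:ℝ) * 1 := mul_le_mul_of_nonneg_left hp1 hk
          exact mul_le_mul_of_nonneg_right this hc
        linarith

/-- MGF bound for the absolute value of a centered binomial random variable:
`E[exp(θ|X − kp|)] ≤ 2·exp(2kθ²/3)` for `X ~ Binomial(k, p)` and `0 ≤ θ ≤ log(4/3)`. -/
theorem binomial_abs_centered_mgf_bound (k : ℕ) (p : ℝ) (hp0 : 0 ≤ p) (hp1 : p ≤ 1)
    (θ : ℝ) (hθ0 : 0 ≤ θ) (hθ : θ ≤ Real.log (4 / 3)) :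
    ∑ x ∈ Finset.range (k + 1),
        (k.choose x : ℝ) * p ^ x * (1 - p) ^ (k - x) * Real.exp (θ * |(x : ℝ) - k * p|)
      ≤ 2 * Real.exp (2 * k * θ ^ 2 / 3) := by
  have hlog : Real.log (4/3) ≤ 3/4 := by
    rw [Real.log_le_iff_le_exp (by norm_num)]
    have := Real.add_one_le_exp (3/4 : ℝ)
    linarith
  have hθ34 : θ ≤ 3/4 := hθ.trans hlog
  have habsθ : |θ| ≤ 3/4 := by rw [abs_of_nonneg hθ0]; exact hθ34
  have habsθ' : |(-θ)| ≤ 3/4 := by rwa [abs_neg]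
  have hq : 0 ≤ 1 - p := by linarith
  have key : ∀ x ∈ Finset.range (k + 1),
      (k.choose x : ℝ) * p ^ x * (1 - p) ^ (k - x) * Real.exp (θ * |(x : ℝ) - k * p|)
        ≤ (k.choose x : ℝ) * p ^ x * (1 - p) ^ (k - x) * Real.exp (θ * ((x : ℝ) - k * p))
          + (k.choose x : ℝ) * p ^ x * (1 - p) ^ (k - x) * Real.exp ((-θ) * ((x : ℝ) - k * p)) := by
    intro x _
    have hw : 0 ≤ (k.choose x : ℝ) * p ^ x * (1 - p) ^ (k - x) := by positivity
    have hle : Real.exp (θ * |(x : ℝ) - k * p|)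
        ≤ Real.exp (θ * ((x : ℝ) - k * p)) + Real.exp ((-θ) * ((x : ℝ) - k * p)) := by
      rcases abs_cases ((x : ℝ) - k * p) with ⟨h, _⟩ | ⟨h, _⟩
      · rw [h]
        have := Real.exp_nonneg ((-θ) * ((x : ℝ) - k * p))
        linarith
      · rw [h]
        have := Real.exp_nonneg (θ * ((x : ℝ) - k * p))
        have : Real.exp (θ * -((x : ℝ) - k * p)) = Real.exp ((-θ) * ((x : ℝ) - k * p)) := by
          ring_nf
        rw [this]
        have := Real.exp_nonneg (θ * ((x : ℝ) - k * p))
        linarith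
    calc (k.choose x : ℝ) * p ^ x * (1 - p) ^ (k - x) * Real.exp (θ * |(x : ℝ) - k * p|)
        ≤ (k.choose x : ℝ) * p ^ x * (1 - p) ^ (k - x)
            * (Real.exp (θ * ((x : ℝ) - k * p)) + Real.exp ((-θ) * ((x : ℝ) - k * p))) :=
          mul_le_mul_of_nonneg_left hle hw
      _ = _ := by ring
  calc ∑ x ∈ Finset.range (k + 1),
        (k.choose x : ℝ) * p ^ x * (1 - p) ^ (k - x) * Real.exp (θ * |(x : ℝ) - k * p|)
      ≤ ∑ x ∈ Finset.range (k + 1),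
          ((k.choose x : ℝ) * p ^ x * (1 - p) ^ (k - x) * Real.exp (θ * ((x : ℝ) - k * p))
            + (k.choose x : ℝ) * p ^ x * (1 - p) ^ (k - x) * Real.exp ((-θ) * ((x : ℝ) - k * p))) :=
        Finset.sum_le_sum key
    _ = (∑ x ∈ Finset.range (k + 1),
          (k.choose x : ℝ) * p ^ x * (1 - p) ^ (k - x) * Real.exp (θ * ((x : ℝ) - k * p)))
        + ∑ x ∈ Finset.range (k + 1),
          (k.choose x : ℝ) * p ^ x * (1 - p) ^ (k - x) * Real.exp ((-θ) * ((x : ℝ) - k * p)) :=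
        Finset.sum_add_distrib
    _ ≤ Real.exp (2 * k * θ ^ 2 / 3) + Real.exp (2 * k * (-θ) ^ 2 / 3) := by
        gcongr ?_ + ?_
        · exact binomial_signed_mgf_bound k p hp0 hp1 θ habsθ
        · exact binomial_signed_mgf_bound k p hp0 hp1 (-θ) habsθ'
    _ = 2 * Real.exp (2 * k * θ ^ 2 / 3) := by
        rw [neg_pow]; ring_nf
end

section
/- Let w, π ∈ ℝ₊ⁿ with distinct entries of w, let σ be the ordering (ranking) of the n items induced by π, and define D_w(σ) = { (1/(2n‖w‖²)) ∑_{i<j} (w_i − w_j)² · 𝟙[(w_i − w_j)(σ_i − σ_j) > 0] }^{1/2}, where σ_i is the rank position of item i under π (so a pair is counted when the order induced by π disagrees with the order induced by w). Then D_w(σ) ≤ ‖w − π‖ / ‖w‖. -/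
open scoped BigOperators

/-- The weighted ranking-error metric `D_w(σ)` of the ordering `σ` induced by the score
estimate `π` is bounded by the normalized Euclidean error `‖w − π‖/‖w‖`. -/
theorem Dw_le_normalized_error (n : ℕ) (w π : Fin n → ℝ)
    (hw : ∀ i, 0 < w i) (hπ : ∀ i, 0 < π i) (hinj : Function.Injective w)
    (σ : Fin n → ℕ) (hσ : ∀ i j, π i > π j → σ i < σ j) :
    Real.sqrt ((1 / (2 * n * (∑ i, w i ^ 2))) *
        ∑ i, ∑ j, if i < j ∧ (w i - w j) * ((σ i : ℝ) - (σ j : ℝ)) > 0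
          then (w i - w j) ^ 2 else 0)
      ≤ Real.sqrt (∑ i, (w i - π i) ^ 2) / Real.sqrt (∑ i, w i ^ 2) := by
  set T : Fin n → Fin n → ℝ := fun i j =>
    if i < j ∧ (w i - w j) * ((σ i : ℝ) - (σ j : ℝ)) > 0 then (w i - w j) ^ 2 else 0 with hT
  set E : ℝ := ∑ i, (w i - π i) ^ 2 with hE
  set W : ℝ := ∑ i, w i ^ 2 with hW
  have hE0 : 0 ≤ E := Finset.sum_nonneg fun i _ => sq_nonneg _
  -- key pair inequality
  have key : ∀ i j, T i j + T j i ≤ 2 * (w i - π i) ^ 2 + 2 * (w j - π j) ^ 2 := by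
    intro i j
    have main : ∀ a b : Fin n, a < b → (w a - w b) * ((σ a : ℝ) - (σ b : ℝ)) > 0 →
        (w a - w b) ^ 2 ≤ 2 * (w a - π a) ^ 2 + 2 * (w b - π b) ^ 2 := by
      intro a b _ hcond
      rcases mul_pos_iff.mp hcond with ⟨h1, h2⟩ | ⟨h1, h2⟩
      · -- w a > w b and σ a > σ b, hence ¬ π a > π b, so π a ≤ π b
        have hσab : ¬ (π a > π b) := by
          intro h
          have := hσ a b h
          have : (σ a : ℝ) < σ b := by exact_mod_cast this
          linarith
        have hpab : π a ≤ π b := le_of_not_gt hσab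
        nlinarith [sq_nonneg ((w a - π a) - (π b - w b)), sq_nonneg ((w a - π a) + (π b - w b))]
      · -- w a < w b and σ a < σ b, hence ¬ π b > π a, so π b ≤ π a
        have hσba : ¬ (π b > π a) := by
          intro h
          have := hσ b a h
          have : (σ b : ℝ) < σ a := by exact_mod_cast this
          linarith
        have hpba : π b ≤ π a := le_of_not_gt hσba
        nlinarith [sq_nonneg ((w b - π b) - (π a - w a)), sq_nonneg ((w b - π b) + (π a - w a))]
    simp only [hT]
    split_ifs with h1 h2 h2
    · exact absurd h2.1 (lt_asymm h1.1)
    · linarith [main i j h1.1 h1.2]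
    · linarith [main j i h2.1 h2.2]
    · nlinarith [sq_nonneg (w i - π i), sq_nonneg (w j - π j)]
  set S : ℝ := ∑ i, ∑ j, T i j with hS
  have hS0 : 0 ≤ S := Finset.sum_nonneg fun i _ => Finset.sum_nonneg fun j _ => by
    simp only [hT]; split_ifs <;> positivity
  have hSsymm : S + S = ∑ i, ∑ j, (T i j + T j i) := by
    have : ∑ i, ∑ j, (T i j + T j i) = (∑ i, ∑ j, T i j) + (∑ i, ∑ j, T j i) := by
      simp only [Finset.sum_add_distrib]
    rw [this]
    congr 1
    exact Finset.sum_comm ..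
  have hSbound : S + S ≤ 2 * n * E + 2 * n * E := by
    rw [hSsymm]
    calc ∑ i, ∑ j, (T i j + T j i)
        ≤ ∑ i : Fin n, ∑ j : Fin n, (2 * (w i - π i) ^ 2 + 2 * (w j - π j) ^ 2) := by
          apply Finset.sum_le_sum; intro i _
          apply Finset.sum_le_sum; intro j _
          exact key i j
      _ = 2 * n * E + 2 * n * E := by
          have h1 : ∀ a : Fin n → ℝ, ∑ _i : Fin n, ∑ j : Fin n, a j = n * ∑ i, a i := by
            intro a
            simp [Finset.sum_const, mul_comm]
          have h2 : ∑ i : Fin n, ∑ j : Fin n, (2 * (w i - π i) ^ 2 + 2 * (w j - π j) ^ 2)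
              = (∑ i : Fin n, ∑ j : Fin n, 2 * (w i - π i) ^ 2)
                + (∑ i : Fin n, ∑ j : Fin n, 2 * (w j - π j) ^ 2) := by
            simp only [Finset.sum_add_distrib]
          rw [h2, Finset.sum_comm (s := Finset.univ) (t := Finset.univ)
            (f := fun i j => 2 * (w i - π i) ^ 2), h1, ← Finset.mul_sum, ← hE]
          ring
  have hSle : S ≤ 2 * n * E := by linarith
  -- main inequality inside sqrt
  have hmain : (1 / (2 * n * W)) * S ≤ E / W := by
    rcases Nat.eq_zero_or_pos n with hn | hn
    · subst hn
      simp [hS, hE, hW]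
    · have hWpos : 0 < W :=
        Finset.sum_pos (fun i _ => pow_pos (hw i) 2) ⟨⟨0, hn⟩, Finset.mem_univ _⟩
      have hnpos : (0:ℝ) < 2 * n * W := by positivity
      rw [div_mul_eq_mul_div, one_mul, div_le_div_iff₀ hnpos hWpos]
      calc S * W ≤ 2 * n * E * W := by nlinarith
        _ = E * (2 * n * W) := by ring
  calc Real.sqrt ((1 / (2 * n * W)) * S) ≤ Real.sqrt (E / W) := Real.sqrt_le_sqrt hmain
    _ = Real.sqrt E / Real.sqrt W := Real.sqrt_div hE0 W
end

section
/- Let p and q be two probability distributions on a finite set that coincide except possibly in coordinates i and j, with all entries of q bounded below by a constant c > 0. Then the KL divergence of the Bernoulli comparison distributions satisfies: for a single Bernoulli trial with success probability p_j/(p_i+p_j) versus q_j/(q_i+q_j), the KL divergence between the distributions of k i.i.d. such trials is at most k·(q_j(p_i − q_i)² + q_i(p_j − q_j)²)/(q_i·q_j·(p_i + p_j)). -/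
/-!
Since `p` and `q` have the same total mass and agree off `{i, j}`, `p i + p j = q i + q j`.
Bounding each logarithm in `klBern` by `log x ≤ x - 1` gives the χ²-bound
`klBern a b ≤ (a - b)² / (b (1 - b))`, and with the common denominator `s = q i + q j` both this
bound and the right-hand side equal `(p j - q j)² / (q i q j)`, because `p i - q i = -(p j - q j)`.
-/

open scoped BigOperators

/-- KL divergence between `Bernoulli(a)` and `Bernoulli(b)`. -/
noncomputable def klBern (a b : ℝ) : ℝ :=
  a * Real.log (a / b) + (1 - a) * Real.log ((1 - a) / (1 - b))

open Real Finset

lemma mul_log_div_le_mul_sub_one {a b : ℝ} (ha : 0 ≤ a) (hb : 0 < b) :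
    a * log (a / b) ≤ a * (a / b - 1) := by
  obtain rfl | ha := ha.eq_or_lt
  · simp
  · exact mul_le_mul_of_nonneg_left (log_le_sub_one_of_pos (by positivity)) ha.le

lemma klBern_le_sq_div {a b : ℝ} (ha₀ : 0 ≤ a) (ha₁ : a ≤ 1) (hb₀ : 0 < b) (hb₁ : b < 1) :
    klBern a b ≤ (a - b) ^ 2 / (b * (1 - b)) :=
  calc klBern a b ≤ a * (a / b - 1) + (1 - a) * ((1 - a) / (1 - b) - 1) :=
        add_le_add (mul_log_div_le_mul_sub_one ha₀ hb₀)
          (mul_log_div_le_mul_sub_one (sub_nonneg.2 ha₁) (sub_pos.2 hb₁))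
    _ = (a - b) ^ 2 / (b * (1 - b)) := by
        field_simp [hb₀.ne', (sub_pos.2 hb₁).ne']
        ring

lemma add_eq_add_of_sum_eq_of_eqOn_compl {ι M : Type*} [Fintype ι] [DecidableEq ι]
    [AddCommGroup M] {f g : ι → M} (hfg : ∑ l, f l = ∑ l, g l) {i j : ι} (hij : i ≠ j)
    (heq : ∀ l, l ≠ i → l ≠ j → f l = g l) : f i + f j = g i + g j := by
  have hsupp : ∑ l, (f l - g l) = ∑ l ∈ {i, j}, (f l - g l) := by
    refine (sum_subset (subset_univ _) fun l _ hl ↦ ?_).symm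
    simp only [mem_insert, mem_singleton, not_or] at hl
    rw [heq l hl.1 hl.2, sub_self]
  rw [sum_sub_distrib, hfg, sub_self, sum_pair hij] at hsupp
  rw [← sub_eq_zero, hsupp]
  abel

lemma sq_sub_div_mul_one_sub_eq_of_add_eq {x₁ x₂ y₁ y₂ : ℝ} (hy₁ : 0 < y₁) (hy₂ : 0 < y₂)
    (hxy : x₁ + x₂ = y₁ + y₂) :
    (x₂ / (x₁ + x₂) - y₂ / (y₁ + y₂)) ^ 2 / (y₂ / (y₁ + y₂) * (1 - y₂ / (y₁ + y₂))) =
      (y₂ * (x₁ - y₁) ^ 2 + y₁ * (x₂ - y₂) ^ 2) / (y₁ * y₂ * (x₁ + x₂)) := by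
  obtain rfl : x₁ = y₁ + y₂ - x₂ := by linarith
  field_simp [hy₁.ne', hy₂.ne', (add_pos hy₁ hy₂).ne']
  ring

theorem kl_pairwise_comparison_bound_general (n : ℕ) (p q : Fin n → ℝ)
    (hp : ∀ l, 0 < p l) (hq : ∀ l, 0 < q l)
    (hpsum : ∑ l, p l = 1) (hqsum : ∑ l, q l = 1)
    (i j : Fin n) (hij : i ≠ j)
    (hcoincide : ∀ l, l ≠ i → l ≠ j → p l = q l)
    (k : ℕ) :
    (k : ℝ) * klBern (p j / (p i + p j)) (q j / (q i + q j)) ≤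
      (k : ℝ) * (q j * (p i - q i) ^ 2 + q i * (p j - q j) ^ 2) /
        (q i * q j * (p i + p j)) := by
  have hs : p i + p j = q i + q j :=
    add_eq_add_of_sum_eq_of_eqOn_compl (hpsum.trans hqsum.symm) hij hcoincide
  have hpi := hp i; have hpj := hp j; have hqi := hq i; have hqj := hq j
  have hkl : klBern (p j / (p i + p j)) (q j / (q i + q j)) ≤
      (p j / (p i + p j) - q j / (q i + q j)) ^ 2 /
        (q j / (q i + q j) * (1 - q j / (q i + q j))) :=
    klBern_le_sq_div (by positivity) (div_le_one_of_le₀ (by linarith) (by positivity))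
      (by positivity) ((div_lt_one (by positivity)).2 (by linarith))
  rw [mul_div_assoc, ← sq_sub_div_mul_one_sub_eq_of_add_eq hqi hqj hs]
  exact mul_le_mul_of_nonneg_left hkl k.cast_nonneg

/-- Bound on the KL divergence between the laws of `k` i.i.d. pairwise-comparison
outcomes under two BTL score vectors `p` and `q` that coincide outside coordinates
`i, j`, with the entries of `q` bounded below by `c > 0`. -/
theorem kl_pairwise_comparison_bound (n : ℕ) (p q : Fin n → ℝ)
    (hp : ∀ l, 0 < p l) (hq : ∀ l, 0 < q l)
    (hpsum : ∑ l, p l = 1) (hqsum : ∑ l, q l = 1)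
    (i j : Fin n) (hij : i ≠ j)
    (hcoincide : ∀ l, l ≠ i → l ≠ j → p l = q l)
    (c : ℝ) (hc : 0 < c) (hqc : ∀ l, c ≤ q l) (k : ℕ) :
    (k : ℝ) * klBern (p j / (p i + p j)) (q j / (q i + q j)) ≤
      (k : ℝ) * (q j * (p i - q i) ^ 2 + q i * (p j - q j) ^ 2) /
        (q i * q j * (p i + p j)) :=
  kl_pairwise_comparison_bound_general n p q hp hq hpsum hqsum i j hij hcoincide k
end
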